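/- Let d ≥ 1, k > 0, β ∈ ℝ, D > 0, L > 0, and let W : ℝ × ℝ^d × ℝ^d → ℂ be a smooth solution of the longitudinal Fokker–Planck equation ∂_z W + p·∇_x W = −kD Σ_{j=1}^d ( i ∂_{p_j} − (β/(2k)) x_j )² W. Set σ* = √(D L³), ℓ_c = L/(k σ*), β_c = k ℓ_c / σ*, and β̃ = β/β_c. Then the rescaled function W̃(z̃, x̃, p̃) := W(L z̃, σ* √k x̃, p̃/(ℓ_c √k)) is a smooth solution of the parameter-free equation ∂_{z̃} W̃ + p̃·∇_{x̃} W̃ = − Σ_{j=1}^d ( −i ∂_{p̃_j} + (β̃/2) x̃_j )² W̃. Consequently the spatial spread scales as σ* ∼ √(D L³), the coherence length as ℓ_c ∼ L/(k σ*), and the coherence bandwidth as β_c ∼ ℓ_c k / σ*. -/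

import Mathlib

open MeasureTheory

noncomputable section

/-- The operator `f ↦ (i ∂_{p_j} - c x_j) f` acting on phase-space functions `f(x,p)`. -/
def momOp {d : ℕ} (c : ℝ) (j : Fin d)
    (f : EuclideanSpace ℝ (Fin d) → EuclideanSpace ℝ (Fin d) → ℂ) :
    EuclideanSpace ℝ (Fin d) → EuclideanSpace ℝ (Fin d) → ℂ :=
  fun x p =>
    Complex.I * fderiv ℝ (f x) p (EuclideanSpace.single j 1) - ((c * x j : ℝ) : ℂ) * f x p

/-- The operator `f ↦ (-i ∂_{p_j} + c x_j) f` acting on phase-space functions `f(x,p)`. -/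
def negMomOp {d : ℕ} (c : ℝ) (j : Fin d)
    (f : EuclideanSpace ℝ (Fin d) → EuclideanSpace ℝ (Fin d) → ℂ) :
    EuclideanSpace ℝ (Fin d) → EuclideanSpace ℝ (Fin d) → ℂ :=
  fun x p =>
    -(Complex.I * fderiv ℝ (f x) p (EuclideanSpace.single j 1)) + ((c * x j : ℝ) : ℂ) * f x p

section Helpers

theorem fderiv_comp_smul' {E F : Type*} [NormedAddCommGroup E] [NormedSpace ℝ E]
    [NormedAddCommGroup F] [NormedSpace ℝ F] (f : E → F) (c : ℝ) (p v : E)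
    (hf : DifferentiableAt ℝ f (c • p)) :
    fderiv ℝ (fun q => f (c • q)) p v = c • fderiv ℝ f (c • p) v := by
  have hL : (fun q : E => f (c • q)) = f ∘ ⇑(c • ContinuousLinearMap.id ℝ E) := rfl
  rw [hL, fderiv_comp p (by simpa using hf) (c • ContinuousLinearMap.id ℝ E).differentiableAt,
    ContinuousLinearMap.fderiv]
  simp [_root_.map_smul]

variable {d : ℕ}

theorem negMomOp_negMomOp' (c : ℝ) (j : Fin d)
    (f : EuclideanSpace ℝ (Fin d) → EuclideanSpace ℝ (Fin d) → ℂ)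
    (x p : EuclideanSpace ℝ (Fin d)) :
    negMomOp c j (negMomOp c j f) x p = momOp c j (momOp c j f) x p := by
  have h1 : negMomOp c j f = fun x p => -(momOp c j f x p) := by
    funext x p; simp only [negMomOp, momOp]; ring
  rw [h1]
  simp only [negMomOp, momOp, fderiv_neg, ContinuousLinearMap.neg_apply]
  have hmx : momOp c j f x = fun y => Complex.I * fderiv ℝ (f x) y (EuclideanSpace.single j 1)
      - ((c * x j : ℝ) : ℂ) * f x y := rfl
  rw [hmx]
  have hneg : fderiv ℝ (fun p => -(Complex.I * fderiv ℝ (f x) p (EuclideanSpace.single j 1)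
        - ((c * x j : ℝ) : ℂ) * f x p)) p
      = -fderiv ℝ (fun y => Complex.I * fderiv ℝ (f x) y (EuclideanSpace.single j 1)
        - ((c * x j : ℝ) : ℂ) * f x y) p := by exact fderiv_neg
  rw [hneg, ContinuousLinearMap.neg_apply]
  ring

theorem negMomOp_scale' (c' a b : ℝ) (ha : a ≠ 0) (hb : b ≠ 0) (j : Fin d)
    (f : EuclideanSpace ℝ (Fin d) → EuclideanSpace ℝ (Fin d) → ℂ)
    (x p : EuclideanSpace ℝ (Fin d))
    (hf : DifferentiableAt ℝ (f (a • x)) (b⁻¹ • p)) :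
    negMomOp c' j (fun x' p' => f (a • x') (b⁻¹ • p')) x p
      = ((b⁻¹ : ℝ) : ℂ) * negMomOp (b * c' / a) j f (a • x) (b⁻¹ • p) := by
  simp only [negMomOp]
  rw [fderiv_comp_smul' (f (a • x)) b⁻¹ p (EuclideanSpace.single j 1) hf]
  have hxj : ((a • x) j : ℝ) = a * x j := by simp [PiLp.smul_apply]
  rw [hxj, show b * c' / a * (a * x j) = b * (c' * x j) by field_simp]
  push_cast
  rw [Complex.real_smul]
  have hb' : (b : ℂ) ≠ 0 := by exact_mod_cast hb
  have hbb : ((b:ℂ))⁻¹ * (b:ℂ) = 1 := inv_mul_cancel₀ hb'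
  linear_combination (norm := skip) (-((c':ℂ) * ((x j : ℝ):ℂ) * f (a • x) (b⁻¹ • p))) * hbb
  simp only [Complex.ofReal_inv]
  ring

theorem negMomOp_const_mul' (c : ℝ) (j : Fin d) (r : ℂ)
    (f : EuclideanSpace ℝ (Fin d) → EuclideanSpace ℝ (Fin d) → ℂ)
    (x p : EuclideanSpace ℝ (Fin d)) (hf : DifferentiableAt ℝ (f x) p) :
    negMomOp c j (fun x p => r * f x p) x p = r * negMomOp c j f x p := by
  simp only [negMomOp]
  rw [fderiv_const_mul hf r]
  simp only [ContinuousLinearMap.smul_apply, smul_eq_mul]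
  ring

theorem negMomOp_contDiff' (c : ℝ) (j : Fin d)
    (f : EuclideanSpace ℝ (Fin d) → EuclideanSpace ℝ (Fin d) → ℂ)
    (x : EuclideanSpace ℝ (Fin d)) (hf : ContDiff ℝ (⊤ : ℕ∞) (f x)) :
    ContDiff ℝ (⊤ : ℕ∞) (fun p => negMomOp c j f x p) := by
  simp only [negMomOp]
  have h1 : ContDiff ℝ (⊤ : ℕ∞) (fun p => fderiv ℝ (f x) p (EuclideanSpace.single j 1)) :=
    (hf.fderiv_right (by simp)).clm_apply contDiff_const
  exact ((contDiff_const.mul h1).neg).add (contDiff_const.mul hf)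

end Helpers

/-- rescaling a smooth solution of the longitudinal Fokker–Planck equation by
the spatial spread `σ* = √(DL³)`, coherence length `ℓ_c = L/(kσ*)` and coherence bandwidth
`β_c = kℓ_c/σ*` yields a smooth solution of the parameter-free equation. -/
theorem longitudinal_fokker_planck_rescaling
    (d : ℕ) (hd : 1 ≤ d) (k β D L : ℝ) (hk : 0 < k) (hD : 0 < D) (hL : 0 < L)
    (σ ℓ βc β' : ℝ)
    (hσ : σ = Real.sqrt (D * L ^ 3)) (hℓ : ℓ = L / (k * σ))
    (hβc : βc = k * ℓ / σ) (hβ' : β' = β / βc)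
    (W : ℝ → EuclideanSpace ℝ (Fin d) → EuclideanSpace ℝ (Fin d) → ℂ)
    (hWsmooth : ContDiff ℝ (⊤ : ℕ∞)
      (fun zxp : ℝ × (EuclideanSpace ℝ (Fin d) × EuclideanSpace ℝ (Fin d)) =>
        W zxp.1 zxp.2.1 zxp.2.2))
    (hPDE : ∀ z x p,
      deriv (fun z' => W z' x p) z +
        (∑ j : Fin d, ((p j : ℝ) : ℂ) *
          fderiv ℝ (fun x' => W z x' p) x (EuclideanSpace.single j 1)) =
      -((k * D : ℝ) : ℂ) *
        ∑ j : Fin d, momOp (β / (2 * k)) j (momOp (β / (2 * k)) j (W z)) x p)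
    (Wt : ℝ → EuclideanSpace ℝ (Fin d) → EuclideanSpace ℝ (Fin d) → ℂ)
    (hWt : ∀ zt xt pt, Wt zt xt pt =
      W (L * zt) ((σ * Real.sqrt k) • xt) ((ℓ * Real.sqrt k)⁻¹ • pt)) :
    ContDiff ℝ (⊤ : ℕ∞)
      (fun zxp : ℝ × (EuclideanSpace ℝ (Fin d) × EuclideanSpace ℝ (Fin d)) =>
        Wt zxp.1 zxp.2.1 zxp.2.2) ∧
    ∀ zt xt pt,
      deriv (fun z' => Wt z' xt pt) zt +
        (∑ j : Fin d, ((pt j : ℝ) : ℂ) *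
          fderiv ℝ (fun x' => Wt zt x' pt) xt (EuclideanSpace.single j 1)) =
      -∑ j : Fin d, negMomOp (β' / 2) j (negMomOp (β' / 2) j (Wt zt)) xt pt := by
  set a := σ * Real.sqrt k with ha_def
  set b := ℓ * Real.sqrt k with hb_def
  -- numeric facts
  have hks : 0 < Real.sqrt k := Real.sqrt_pos.mpr hk
  have hsk : Real.sqrt k * Real.sqrt k = k := Real.mul_self_sqrt hk.le
  have hσ0 : 0 < σ := by rw [hσ]; exact Real.sqrt_pos.mpr (by positivity)
  have hσσ : σ * σ = D * L ^ 3 := by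
    rw [hσ]; exact Real.mul_self_sqrt (by positivity)
  have hℓ0 : 0 < ℓ := by rw [hℓ]; positivity
  have ha0 : 0 < a := by rw [ha_def]; positivity
  have hb0 : 0 < b := by rw [hb_def]; positivity
  have hβc0 : 0 < βc := by rw [hβc]; positivity
  have hab : b * a = L := by
    rw [ha_def, hb_def, hℓ]
    field_simp
    linear_combination hsk
  have hbc : b * (β' / 2) / a = β / (2 * k) := by
    rw [ha_def, hb_def, hβ', hβc, hℓ]
    rw [div_div_eq_mul_div, div_eq_div_iff (by positivity) (by positivity)]
    field_simp
  have hbinv : b⁻¹ * b⁻¹ = L * (k * D) := by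
    rw [← mul_inv]
    have hbb : (b * b) * (L * (k * D)) = 1 := by
      rw [hb_def, hℓ]
      field_simp
      linear_combination L ^ 3 * D * hsk - k * hσσ
    field_simp at hbb ⊢
    nlinarith [hbb, hb0]
  -- smoothness facts
  have hW2 : ∀ z x, ContDiff ℝ (⊤ : ℕ∞) (fun p : EuclideanSpace ℝ (Fin d) => W z x p) := fun z x => by
    exact hWsmooth.comp (contDiff_const.prodMk (contDiff_const.prodMk contDiff_id))
  have hWz : ∀ x p, ContDiff ℝ (⊤ : ℕ∞) (fun z => W z x p) := fun x p => by
    exact hWsmooth.comp (contDiff_id.prodMk (contDiff_const (c := (x, p))))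
  have hWx : ∀ z p, ContDiff ℝ (⊤ : ℕ∞) (fun x : EuclideanSpace ℝ (Fin d) => W z x p) := fun z p => by
    exact hWsmooth.comp (contDiff_const.prodMk (contDiff_id.prodMk contDiff_const))
  constructor
  · -- smoothness of Wt
    have hfun : (fun zxp : ℝ × (EuclideanSpace ℝ (Fin d) × EuclideanSpace ℝ (Fin d)) =>
          Wt zxp.1 zxp.2.1 zxp.2.2)
        = (fun zxp : ℝ × (EuclideanSpace ℝ (Fin d) × EuclideanSpace ℝ (Fin d)) =>
          W zxp.1 zxp.2.1 zxp.2.2) ∘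
          ⇑((L • ContinuousLinearMap.id ℝ ℝ).prodMap
            ((a • ContinuousLinearMap.id ℝ (EuclideanSpace ℝ (Fin d))).prodMap
              (b⁻¹ • ContinuousLinearMap.id ℝ (EuclideanSpace ℝ (Fin d))))) := by
      funext zxp
      simp [hWt, Function.comp, smul_eq_mul]
    rw [hfun]
    exact hWsmooth.comp (ContinuousLinearMap.contDiff _)
  · intro zt xt pt
    have hWtz : Wt zt = fun x p => W (L * zt) (a • x) (b⁻¹ • p) := by
      funext x p; rw [hWt]
    -- differentiability helpers
    have hdiffW : ∀ (x p : EuclideanSpace ℝ (Fin d)),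
        DifferentiableAt ℝ (W (L * zt) x) p := fun x p => by
      exact ((hW2 (L * zt) x).differentiable (by simp) p)
    have hdiffG : ∀ (j : Fin d) (x p : EuclideanSpace ℝ (Fin d)),
        DifferentiableAt ℝ (negMomOp (β / (2 * k)) j (W (L * zt)) x) p := fun j x p => by
      exact ((negMomOp_contDiff' (β / (2 * k)) j (W (L * zt)) x
        (hW2 (L * zt) x)).differentiable (by simp) p)
    -- one application of the operator
    have hstep1 : ∀ j : Fin d, negMomOp (β' / 2) j (Wt zt)
        = fun x p => ((b⁻¹ : ℝ) : ℂ) *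
            negMomOp (β / (2 * k)) j (W (L * zt)) (a • x) (b⁻¹ • p) := by
      intro j; funext x p
      rw [hWtz, negMomOp_scale' (β' / 2) a b ha0.ne' hb0.ne' j (W (L * zt)) x p (hdiffW _ _), hbc]
    -- two applications
    have hstep2 : ∀ j : Fin d, negMomOp (β' / 2) j (negMomOp (β' / 2) j (Wt zt)) xt pt
        = ((b⁻¹ : ℝ) : ℂ) * (((b⁻¹ : ℝ) : ℂ) *
            momOp (β / (2 * k)) j (momOp (β / (2 * k)) j (W (L * zt))) (a • xt) (b⁻¹ • pt)) := by
      intro j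
      rw [hstep1 j]
      have hdiff1 : DifferentiableAt ℝ
          (fun p : EuclideanSpace ℝ (Fin d) =>
            negMomOp (β / (2 * k)) j (W (L * zt)) (a • xt) (b⁻¹ • p)) pt := by
        exact (hdiffG j (a • xt) (b⁻¹ • pt)).comp pt (differentiableAt_id.const_smul b⁻¹)
      rw [negMomOp_const_mul' (β' / 2) j _
        (fun x p => negMomOp (β / (2 * k)) j (W (L * zt)) (a • x) (b⁻¹ • p)) xt pt hdiff1]
      rw [negMomOp_scale' (β' / 2) a b ha0.ne' hb0.ne' j
        (negMomOp (β / (2 * k)) j (W (L * zt))) xt pt (hdiffG j _ _), hbc]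
      rw [negMomOp_negMomOp']
    -- z-derivative
    have hz : deriv (fun z' => Wt z' xt pt) zt
        = (L : ℂ) * deriv (fun z' => W z' (a • xt) (b⁻¹ • pt)) (L * zt) := by
      have h1 : (fun z' => Wt z' xt pt)
          = fun z' : ℝ => (fun z'' => W z'' (a • xt) (b⁻¹ • pt)) (L • z') := by
        funext z'; rw [hWt]; simp [smul_eq_mul]
      rw [h1, ← fderiv_apply_one_eq_deriv, fderiv_comp_smul' (fun z'' => W z'' (a • xt) (b⁻¹ • pt)) L zt 1
        (by simpa [smul_eq_mul] using
          ((hWz (a • xt) (b⁻¹ • pt)).differentiable (by simp) (L * zt)))]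
      simp [fderiv_apply_one_eq_deriv, Complex.real_smul, smul_eq_mul]
    -- x-derivative
    have hx : ∀ j : Fin d, fderiv ℝ (fun x' => Wt zt x' pt) xt (EuclideanSpace.single j 1)
        = (a : ℂ) * fderiv ℝ (fun x => W (L * zt) x (b⁻¹ • pt)) (a • xt)
            (EuclideanSpace.single j 1) := by
      intro j
      have h1 : (fun x' => Wt zt x' pt)
          = fun x' : EuclideanSpace ℝ (Fin d) =>
              (fun x => W (L * zt) x (b⁻¹ • pt)) (a • x') := by
        funext x'; rw [hWt]
      rw [h1, fderiv_comp_smul' (fun x => W (L * zt) x (b⁻¹ • pt)) a xt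
        (EuclideanSpace.single j 1) ((hWx (L * zt) (b⁻¹ • pt)).differentiable (by simp) _),
        Complex.real_smul]
    -- momentum components
    have hptj : ∀ j : Fin d, (pt j : ℝ) = b * ((b⁻¹ • pt : EuclideanSpace ℝ (Fin d)) j) := by
      intro j
      simp [PiLp.smul_apply, smul_eq_mul]
      field_simp
    have habC : (b : ℂ) * (a : ℂ) = (L : ℂ) := by exact_mod_cast hab
    have hPDE' := hPDE (L * zt) (a • xt) (b⁻¹ • pt)
    -- assemble
    have hsum : (∑ j : Fin d, ((pt j : ℝ) : ℂ) *
          fderiv ℝ (fun x' => Wt zt x' pt) xt (EuclideanSpace.single j 1))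
        = ∑ j : Fin d, (L : ℂ) * ((((b⁻¹ • pt : EuclideanSpace ℝ (Fin d)) j : ℝ) : ℂ) *
            fderiv ℝ (fun x => W (L * zt) x (b⁻¹ • pt)) (a • xt) (EuclideanSpace.single j 1)) := by
      refine Finset.sum_congr rfl fun j _ => ?_
      rw [hx j, hptj j, ← habC]
      push_cast
      ring
    rw [hz, hsum, ← Finset.mul_sum, ← mul_add, hPDE']
    have hsum2 : (∑ j : Fin d, negMomOp (β' / 2) j (negMomOp (β' / 2) j (Wt zt)) xt pt)
        = ((b⁻¹ : ℝ) : ℂ) * (((b⁻¹ : ℝ) : ℂ) *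
            ∑ j : Fin d, momOp (β / (2 * k)) j (momOp (β / (2 * k)) j (W (L * zt)))
              (a • xt) (b⁻¹ • pt)) := by
      rw [Finset.mul_sum, Finset.mul_sum]
      exact Finset.sum_congr rfl fun j _ => by rw [hstep2 j]
    rw [hsum2]
    have hC : ((b⁻¹ : ℝ) : ℂ) * ((b⁻¹ : ℝ) : ℂ) = (L : ℂ) * ((k * D : ℝ) : ℂ) := by
      exact_mod_cast hbinv
    set S := ∑ j : Fin d, momOp (β / (2 * k)) j (momOp (β / (2 * k)) j (W (L * zt)))
      (a • xt) (b⁻¹ • pt)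
    linear_combination S * hC
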